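/- arXiv:2305.12024 — 6 statements merged into one kernel-verified Lean document; each statement's English description precedes it below -/
import Mathlib

section
/- For every positive integer k, υ_{k+1} ≤ (1 + B) · k^{B/2} · υ_1, i.e. υ_{k+1} ≤ (1 + 4δ/(nε)) · k^{2δ/(nε)} · υ_1. -/
set_option maxHeartbeats 4000000

open Finset

private lemma stmt4_log_lb {x : ℝ} (hx : 0 ≤ x) : 2*x/(2+x) ≤ Real.log (1+x) := by
  set f : ℝ → ℝ := fun z => Real.log (1+z) - 2*z/(2+z) with hf
  have hder : ∀ y : ℝ, 0 ≤ y → HasDerivAt f (1/(1+y) - 4/(2+y)^2) y := by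
    intro y hy
    have h1 : HasDerivAt (fun z : ℝ => Real.log (1+z)) (1/(1+y)) y := by
      have hne : (1:ℝ) + y ≠ 0 := by linarith
      have := (Real.hasDerivAt_log hne).comp y ((hasDerivAt_id y).const_add 1)
      simpa [one_div, Function.comp_def] using this
    have h2 : HasDerivAt (fun z : ℝ => 2*z/(2+z)) (4/(2+y)^2) y := by
      have hne : (2:ℝ) + y ≠ 0 := by linarith
      have : HasDerivAt (fun z : ℝ => 2*z/(2+z)) ((2*1*(2+y) - 2*y*1)/(2+y)^2) y := ((hasDerivAt_id y).const_mul (2:ℝ)).div ((hasDerivAt_id y).const_add 2) hne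
      convert this using 1
      ring
    exact h1.sub h2
  have hmono : MonotoneOn f (Set.Ici 0) := by
    apply monotoneOn_of_deriv_nonneg (convex_Ici 0)
    · intro y hy
      exact ((hder y hy).continuousAt).continuousWithinAt
    · intro y hy
      rw [interior_Ici] at hy
      exact ((hder y (le_of_lt hy)).differentiableAt).differentiableWithinAt
    · intro y hy
      rw [interior_Ici] at hy
      have hy' : 0 < y := hy
      rw [(hder y hy'.le).deriv]
      have h1 : (0:ℝ) < 1 + y := by linarith
      have h2 : (0:ℝ) < 2 + y := by linarith
      rw [div_sub_div _ _ (by positivity) (by positivity), le_div_iff₀ (by positivity)]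
      nlinarith [sq_nonneg y]
  have h0 : f 0 = 0 := by simp [hf]
  have hle := hmono (Set.mem_Ici.mpr le_rfl) (Set.mem_Ici.mpr hx) hx
  rw [h0] at hle
  simp only [hf] at hle
  linarith

private lemma stmt4_cubic_le_exp {t : ℝ} (ht : 0 ≤ t) :
    1 + t + t^2/2 + t^3/6 ≤ Real.exp t := by
  have h := Real.sum_le_exp_of_nonneg ht 4
  have e : ∑ i ∈ Finset.range 4, t^i/(Nat.factorial i) = 1 + t + t^2/2 + t^3/6 := by
    simp [Finset.sum_range_succ, Nat.factorial]
  rw [e] at h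
  exact h

private lemma stmt4_cert_id (B K Λ S : ℝ) :
    4*(((K+1)^2*(6*(2*K+1)^3 + 12*B*(2*K+1)^2 + 12*B^2*(2*K+1) + 8*B^3) - (K+1)*(6*K*(2*K+1)^3))*K^2 - (6*K*(2*K+1)^3)*(1+B)*K*(B/2-K))*(((K+1)^2*(6*(2*K+1)^3 + 12*B*(2*K+1)^2 + 12*B^2*(2*K+1) + 8*B^3) - (K+1)*(6*K*(2*K+1)^3))*((K*Λ - (1+B/2)*S)^2 + (B/2)*((1+B/2)*S^2)) - (6*K*(2*K+1)^3)*(1+B)*((1+B/2)*(2*K*S*Λ - S^2) + K*(B/2-K)*Λ^2))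
      = (2*(((K+1)^2*(6*(2*K+1)^3 + 12*B*(2*K+1)^2 + 12*B^2*(2*K+1) + 8*B^3) - (K+1)*(6*K*(2*K+1)^3))*K^2 - (6*K*(2*K+1)^3)*(1+B)*K*(B/2-K))*Λ + (-(2*(1+B/2)*K*(((K+1)^2*(6*(2*K+1)^3 + 12*B*(2*K+1)^2 + 12*B^2*(2*K+1) + 8*B^3) - (K+1)*(6*K*(2*K+1)^3))+(1+B)*(6*K*(2*K+1)^3))))*S)^2 + (4+2*B)*(K*((5832*B^3 + 27216*B^3*(K-1) + 53946*B^3*(K-1)^2 + 58914*B^3*(K-1)^3 + 38304*B^3*(K-1)^4 + 14832*B^3*(K-1)^5 + 3168*B^3*(K-1)^6 + 288*B^3*(K-1)^7 + 11664*B^4 + 51840*B^4*(K-1) + 97524*B^4*(K-1)^2 + 100764*B^4*(K-1)^3 + 61800*B^4*(K-1)^4 + 22512*B^4*(K-1)^5 + 4512*B^4*(K-1)^6 + 384*B^4*(K-1)^7 + 7344*B^5 + 29664*B^5*(K-1) + 50172*B^5*(K-1)^2 + 46092*B^5*(K-1)^3 + 24840*B^5*(K-1)^4 + 7848*B^5*(K-1)^5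 + 1344*B^5*(K-1)^6 + 96*B^5*(K-1)^7 + 2016*B^6 + 6528*B^6*(K-1) + 8280*B^6*(K-1)^2 + 5160*B^6*(K-1)^3 + 1584*B^6*(K-1)^4 + 192*B^6*(K-1)^5 + 512*B^7 + 1536*B^7*(K-1) + 1792*B^7*(K-1)^2 + 1024*B^7*(K-1)^3 + 288*B^7*(K-1)^4 + 32*B^7*(K-1)^5)*S^2)) := by ring

private lemma stmt4_step_key (B K Λ S Fv : ℝ) (hB : 0 < B) (hK : 1 ≤ K)
    (hq : (K*Λ - (1+B/2)*S)^2 + (B/2)*((1+B/2)*S^2) ≤ (1+B)*Fv) :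
    6*K*(2*K+1)^3 * ((1+B/2)*(2*K*S*Λ - S^2) + K*(B/2-K)*Λ^2)
      ≤ (((K+1)^2*(6*(2*K+1)^3 + 12*B*(2*K+1)^2 + 12*B^2*(2*K+1) + 8*B^3)) - (K+1)*(6*K*(2*K+1)^3)) * Fv := by
  have hm : (0:ℝ) ≤ K - 1 := by linarith
  have hB' : (0:ℝ) ≤ B := hB.le
  have hK0 : (0:ℝ) < K := by linarith
  have hB1 : (0:ℝ) < 1 + B := by linarith
  have hdD0 : (0:ℝ) ≤ ((K+1)^2*(6*(2*K+1)^3 + 12*B*(2*K+1)^2 + 12*B^2*(2*K+1) + 8*B^3) - (K+1)*(6*K*(2*K+1)^3)) := by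
    have h1 : ((K+1)^2*(6*(2*K+1)^3 + 12*B*(2*K+1)^2 + 12*B^2*(2*K+1) + 8*B^3) - (K+1)*(6*K*(2*K+1)^3)) = 324 + 810*(K-1) + 756*(K-1)^2 + 312*(K-1)^3 + 48*(K-1)^4 + 432*B + 1008*B*(K-1) + 876*B*(K-1)^2 + 336*B*(K-1)^3 + 48*B*(K-1)^4 + 144*B^2 + 240*B^2*(K-1) + 132*B^2*(K-1)^2 + 24*B^2*(K-1)^3 + 32*B^3 + 32*B^3*(K-1) + 8*B^3*(K-1)^2 := by ring
    rw [h1]; positivity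
  have h4A : (0:ℝ) < 4*(((K+1)^2*(6*(2*K+1)^3 + 12*B*(2*K+1)^2 + 12*B^2*(2*K+1) + 8*B^3) - (K+1)*(6*K*(2*K+1)^3))*K^2 - (6*K*(2*K+1)^3)*(1+B)*K*(B/2-K)) := by
    have h2 : 4*(((K+1)^2*(6*(2*K+1)^3 + 12*B*(2*K+1)^2 + 12*B^2*(2*K+1) + 8*B^3) - (K+1)*(6*K*(2*K+1)^3))*K^2 - (6*K*(2*K+1)^3)*(1+B)*K*(B/2-K)) = 4*(K*(486 + 1782*(K-1) + 2592*(K-1)^2 + 1872*(K-1)^3 + 672*(K-1)^4 + 96*(K-1)^5 + 513*B + 1845*B*(K-1) + 2640*B*(K-1)^2 + 1884*B*(K-1)^3 + 672*B*(K-1)^4 + 96*B*(K-1)^5 + 63*B^2 + 141*B^2*(K-1) + 102*B^2*(K-1)^2 + 24*B^2*(K-1)^3 + 32*B^3 + 64*B^3*(K-1) + 40*B^3*(K-1)^2 + 8*B^3*(K-1)^3)) := by ring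
    rw [h2]; positivity
  have hnn : (0:ℝ) ≤ (2*(((K+1)^2*(6*(2*K+1)^3 + 12*B*(2*K+1)^2 + 12*B^2*(2*K+1) + 8*B^3) - (K+1)*(6*K*(2*K+1)^3))*K^2 - (6*K*(2*K+1)^3)*(1+B)*K*(B/2-K))*Λ + (-(2*(1+B/2)*K*(((K+1)^2*(6*(2*K+1)^3 + 12*B*(2*K+1)^2 + 12*B^2*(2*K+1) + 8*B^3) - (K+1)*(6*K*(2*K+1)^3))+(1+B)*(6*K*(2*K+1)^3))))*S)^2 + (4+2*B)*(K*((5832*B^3 + 27216*B^3*(K-1) + 53946*B^3*(K-1)^2 + 58914*B^3*(K-1)^3 + 38304*B^3*(K-1)^4 + 14832*B^3*(K-1)^5 + 3168*B^3*(K-1)^6 + 288*B^3*(K-1)^7 + 11664*B^4 + 51840*B^4*(K-1) + 97524*B^4*(K-1)^2 + 100764*B^4*(K-1)^3 + 61800*B^4*(K-1)^4 + 22512*B^4*(K-1)^5 + 4512*B^4*(K-1)^6 + 384*B^4*(K-1)^7 + 7344*B^5 + 29664*B^5*(K-1) + 50172*B^5*(K-1)^2 + 46092*B^5*(K-1)^3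 + 24840*B^5*(K-1)^4 + 7848*B^5*(K-1)^5 + 1344*B^5*(K-1)^6 + 96*B^5*(K-1)^7 + 2016*B^6 + 6528*B^6*(K-1) + 8280*B^6*(K-1)^2 + 5160*B^6*(K-1)^3 + 1584*B^6*(K-1)^4 + 192*B^6*(K-1)^5 + 512*B^7 + 1536*B^7*(K-1) + 1792*B^7*(K-1)^2 + 1024*B^7*(K-1)^3 + 288*B^7*(K-1)^4 + 32*B^7*(K-1)^5)*S^2)) := by positivity
  have hXmul : (0:ℝ) ≤ 4*(((K+1)^2*(6*(2*K+1)^3 + 12*B*(2*K+1)^2 + 12*B^2*(2*K+1) + 8*B^3) - (K+1)*(6*K*(2*K+1)^3))*K^2 - (6*K*(2*K+1)^3)*(1+B)*K*(B/2-K))*(((K+1)^2*(6*(2*K+1)^3 + 12*B*(2*K+1)^2 + 12*B^2*(2*K+1) + 8*B^3) - (K+1)*(6*K*(2*K+1)^3))*((K*Λ - (1+B/2)*S)^2 + (B/2)*((1+B/2)*S^2)) - (6*K*(2*K+1)^3)*(1+B)*((1+B/2)*(2*K*S*Λ - S^2) + K*(B/2-K)*Λ^2)) := by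
    rw [stmt4_cert_id]; exact hnn
  have hX : (0:ℝ) ≤ ((K+1)^2*(6*(2*K+1)^3 + 12*B*(2*K+1)^2 + 12*B^2*(2*K+1) + 8*B^3) - (K+1)*(6*K*(2*K+1)^3))*((K*Λ - (1+B/2)*S)^2 + (B/2)*((1+B/2)*S^2)) - (6*K*(2*K+1)^3)*(1+B)*((1+B/2)*(2*K*S*Λ - S^2) + K*(B/2-K)*Λ^2) := by
    have h3 : 4*(((K+1)^2*(6*(2*K+1)^3 + 12*B*(2*K+1)^2 + 12*B^2*(2*K+1) + 8*B^3) - (K+1)*(6*K*(2*K+1)^3))*K^2 - (6*K*(2*K+1)^3)*(1+B)*K*(B/2-K))*(0:ℝ) ≤ 4*(((K+1)^2*(6*(2*K+1)^3 + 12*B*(2*K+1)^2 + 12*B^2*(2*K+1) + 8*B^3) - (K+1)*(6*K*(2*K+1)^3))*K^2 - (6*K*(2*K+1)^3)*(1+B)*K*(B/2-K))*(((K+1)^2*(6*(2*K+1)^3 + 12*B*(2*K+1)^2 + 12*B^2*(2*K+1) + 8*B^3) - (K+1)*(6*K*(2*K+1)^3))*((K*Λ - (1+B/2)*S)^2 +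 (B/2)*((1+B/2)*S^2)) - (6*K*(2*K+1)^3)*(1+B)*((1+B/2)*(2*K*S*Λ - S^2) + K*(B/2-K)*Λ^2)) := by
      rw [mul_zero]; exact hXmul
    exact le_of_mul_le_mul_left h3 h4A
  have hq' : ((K+1)^2*(6*(2*K+1)^3 + 12*B*(2*K+1)^2 + 12*B^2*(2*K+1) + 8*B^3) - (K+1)*(6*K*(2*K+1)^3))*((K*Λ - (1+B/2)*S)^2 + (B/2)*((1+B/2)*S^2)) ≤ ((K+1)^2*(6*(2*K+1)^3 + 12*B*(2*K+1)^2 + 12*B^2*(2*K+1) + 8*B^3) - (K+1)*(6*K*(2*K+1)^3))*((1+B)*Fv) := mul_le_mul_of_nonneg_left hq hdD0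
  have h9 : (1+B)*((6*K*(2*K+1)^3)*((1+B/2)*(2*K*S*Λ - S^2) + K*(B/2-K)*Λ^2)) ≤ (1+B)*(((K+1)^2*(6*(2*K+1)^3 + 12*B*(2*K+1)^2 + 12*B^2*(2*K+1) + 8*B^3) - (K+1)*(6*K*(2*K+1)^3))*Fv) := by linarith [hX, hq']
  exact le_of_mul_le_mul_left h9 hB1

/-- Corollary 1.3. If `0 < υ₁ ≤ υ₂ ≤ ⋯` satisfies the Yang-type
quadratic inequality with constant `B = 4δ/(nε)`, then
`υ_{k+1} ≤ (1 + B) k^{B/2} υ₁` for every positive integer `k`. -/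
theorem stmt_4 (n : ℕ) (hn : 0 < n) (ε δ : ℝ) (hε : 0 < ε) (hεδ : ε ≤ δ)
    (B : ℝ) (hB : B = 4 * δ / (n * ε))
    (υ : ℕ → ℝ)
    (hpos : ∀ i, 1 ≤ i → 0 < υ i)
    (hmono : ∀ i j, 1 ≤ i → i ≤ j → υ i ≤ υ j)
    (hyang : ∀ k, 1 ≤ k →
      ∑ i ∈ Icc 1 k, (υ (k + 1) - υ i) ^ 2 ≤
        B * ∑ i ∈ Icc 1 k, (υ (k + 1) - υ i) * υ i) :
    ∀ k, 1 ≤ k → υ (k + 1) ≤ (1 + B) * (k : ℝ) ^ (B / 2) * υ 1 := by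
  have hδ : 0 < δ := lt_of_lt_of_le hε hεδ
  have hn' : (0:ℝ) < n := by exact_mod_cast hn
  have hB0 : 0 < B := by rw [hB]; positivity
  have hB' : (0:ℝ) ≤ B := hB0.le
  have hB1 : (0:ℝ) < 1 + B := by linarith
  have hv1 : 0 < υ 1 := hpos 1 le_rfl
  -- expansion of the two Yang sums
  have e1 : ∀ (c : ℝ) (k : ℕ), ∑ i ∈ Icc 1 k, (c - υ i)^2
      = (k:ℝ)*c^2 - 2*c*(∑ i ∈ Icc 1 k, υ i) + ∑ i ∈ Icc 1 k, (υ i)^2 := by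
    intro c k
    induction k with
    | zero => simp
    | succ m ih =>
        simp only [Finset.sum_Icc_succ_top (show 1 ≤ m+1 by omega)]
        rw [ih]
        push_cast
        ring
  have e2 : ∀ (c : ℝ) (k : ℕ), ∑ i ∈ Icc 1 k, (c - υ i)*υ i
      = c*(∑ i ∈ Icc 1 k, υ i) - ∑ i ∈ Icc 1 k, (υ i)^2 := by
    intro c k
    induction k with
    | zero => simp
    | succ m ih =>
        simp only [Finset.sum_Icc_succ_top (show 1 ≤ m+1 by omega)]
        rw [ih]
        ring
  -- the quadratic constraint in completed-square form
  have hquad : ∀ k : ℕ, 1 ≤ k →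
      ((k:ℝ)*(υ (k+1)) - (1+B/2)*(∑ i ∈ Icc 1 k, υ i))^2
        + (B/2)*((1+B/2)*(∑ i ∈ Icc 1 k, υ i)^2)
      ≤ (1+B)*((1+B/2)*(∑ i ∈ Icc 1 k, υ i)^2 - (k:ℝ)*(∑ i ∈ Icc 1 k, (υ i)^2)) := by
    intro k hk
    have hy := hyang k hk
    rw [e1 (υ (k+1)) k, e2 (υ (k+1)) k] at hy
    have hk0 : (0:ℝ) ≤ (k:ℝ) := Nat.cast_nonneg k
    nlinarith [mul_le_mul_of_nonneg_left hy hk0]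
  -- the rpow comparison for the growth factor
  have hcore : ∀ k : ℕ, 1 ≤ k →
      ((k:ℝ)+1)^2*(6*(2*(k:ℝ)+1)^3 + 12*B*(2*(k:ℝ)+1)^2 + 12*B^2*(2*(k:ℝ)+1) + 8*B^3)
          * (k:ℝ)^(B+2)
        ≤ ((k:ℝ)*(6*(k:ℝ)*(2*(k:ℝ)+1)^3)) * ((k:ℝ)+1)^(B+2) := by
    intro k hk
    have hK1 : (1:ℝ) ≤ (k:ℝ) := by exact_mod_cast hk
    set K := (k:ℝ) with hKdef
    have hK0 : (0:ℝ) < K := by linarith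
    have h2K : (0:ℝ) < 2*K+1 := by linarith
    have ht0 : (0:ℝ) ≤ 2*B/(2*K+1) := by positivity
    have hx0 : (0:ℝ) < 1 + 1/K := by positivity
    have hlog := stmt4_log_lb (x := 1/K) (by positivity)
    have hlog' : 2*B/(2*K+1) ≤ B * Real.log (1 + 1/K) := by
      have hKne : K ≠ 0 := ne_of_gt hK0
      have heq : 2*(1/K)/(2+1/K) = 2/(2*K+1) := by
        rw [div_eq_div_iff (by positivity) (by positivity)]
        field_simp
      have h := mul_le_mul_of_nonneg_left hlog hB'
      rw [heq] at h
      calc 2*B/(2*K+1) = B*(2/(2*K+1)) := by ring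
        _ ≤ B*Real.log (1+1/K) := h
    have hser := stmt4_cubic_le_exp ht0
    have hexp : Real.exp (2*B/(2*K+1)) ≤ (1+1/K)^B := by
      rw [Real.rpow_def_of_pos hx0]
      exact Real.exp_le_exp.mpr (by linarith [hlog'])
    have h5 : 1 + 2*B/(2*K+1) + (2*B/(2*K+1))^2/2 + (2*B/(2*K+1))^3/6 ≤ (1+1/K)^B :=
      le_trans hser hexp
    have hKB : K^(B+2) = K^B * K^2 := by
      rw [show B+2 = B + ((2:ℕ):ℝ) by norm_num, Real.rpow_add hK0, Real.rpow_natCast]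
    have hKB' : (K+1)^(B+2) = (K+1)^B * (K+1)^2 := by
      rw [show B+2 = B + ((2:ℕ):ℝ) by norm_num, Real.rpow_add (by linarith), Real.rpow_natCast]
    have hmulr : (1+1/K)^B * K^B = (K+1)^B := by
      rw [← Real.mul_rpow (le_of_lt hx0) hK0.le]
      congr 1
      field_simp
    have e3 : (K+1)^2*(6*(2*K+1)^3 + 12*B*(2*K+1)^2 + 12*B^2*(2*K+1) + 8*B^3) * K^(B+2)
        = (1 + 2*B/(2*K+1) + (2*B/(2*K+1))^2/2 + (2*B/(2*K+1))^3/6)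
            * ((K+1)^2*(6*(2*K+1)^3)*K^2*K^B) := by
      rw [hKB]
      field_simp
      ring
    calc (K+1)^2*(6*(2*K+1)^3 + 12*B*(2*K+1)^2 + 12*B^2*(2*K+1) + 8*B^3) * K^(B+2)
        = (1 + 2*B/(2*K+1) + (2*B/(2*K+1))^2/2 + (2*B/(2*K+1))^3/6)
            * ((K+1)^2*(6*(2*K+1)^3)*K^2*K^B) := e3
      _ ≤ (1+1/K)^B * ((K+1)^2*(6*(2*K+1)^3)*K^2*K^B) := by
          apply mul_le_mul_of_nonneg_right h5
          have : (0:ℝ) ≤ K^B := Real.rpow_nonneg hK0.le B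
          positivity
      _ = ((1+1/K)^B*K^B) * ((K+1)^2*(6*(2*K+1)^3)*K^2) := by ring
      _ = (K+1)^B * ((K+1)^2*(6*(2*K+1)^3)*K^2) := by rw [hmulr]
      _ = (K*(6*K*(2*K+1)^3)) * ((K+1)^B*(K+1)^2) := by ring
      _ = (K*(6*K*(2*K+1)^3)) * (K+1)^(B+2) := by rw [hKB']
  -- the inductive invariant
  have inv : ∀ k : ℕ, 1 ≤ k →
      (1+B/2)*(∑ i ∈ Icc 1 k, υ i)^2 - (k:ℝ)*(∑ i ∈ Icc 1 k, (υ i)^2)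
        ≤ (B/2)*((k:ℝ)^(B+2))*(υ 1)^2 := by
    intro k hk
    induction k, hk using Nat.le_induction with
    | base =>
        simp only [Finset.Icc_self, Finset.sum_singleton, Nat.cast_one, Real.one_rpow]
        nlinarith [sq_nonneg (υ 1)]
    | succ m hm ih =>
        have hK1 : (1:ℝ) ≤ (m:ℝ) := by exact_mod_cast hm
        have hK0 : (0:ℝ) < (m:ℝ) := by linarith
        have hq := hquad m hm
        have hst := stmt4_step_key B (m:ℝ) (υ (m+1)) (∑ i ∈ Icc 1 m, υ i)
          ((1+B/2)*(∑ i ∈ Icc 1 m, υ i)^2 - (m:ℝ)*(∑ i ∈ Icc 1 m, (υ i)^2)) hB0 hK1 hq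
        have hcor := hcore m hm
        have hS' : (∑ i ∈ Icc 1 (m+1), υ i) = (∑ i ∈ Icc 1 m, υ i) + υ (m+1) :=
          Finset.sum_Icc_succ_top (by omega) _
        have hQ' : (∑ i ∈ Icc 1 (m+1), (υ i)^2) = (∑ i ∈ Icc 1 m, (υ i)^2) + (υ (m+1))^2 :=
          Finset.sum_Icc_succ_top (by omega) _
        rw [hS', hQ']
        push_cast
        set K := (m:ℝ) with hKdef
        set Λ := υ (m+1) with hΛdef
        set Sv := ∑ i ∈ Icc 1 m, υ i with hSdef
        set Qv := ∑ i ∈ Icc 1 m, (υ i)^2 with hQdef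
        have hrhoD0 : (0:ℝ) ≤ ((K+1)^2*(6*(2*K+1)^3 + 12*B*(2*K+1)^2 + 12*B^2*(2*K+1) + 8*B^3)) := by positivity
        have hKD : (0:ℝ) < K*(6*K*(2*K+1)^3) := by positivity
        have step1 : (K*(6*K*(2*K+1)^3))*((1+B/2)*(Sv+Λ)^2 - (K+1)*(Qv+Λ^2))
            ≤ ((K+1)^2*(6*(2*K+1)^3 + 12*B*(2*K+1)^2 + 12*B^2*(2*K+1) + 8*B^3))*((1+B/2)*Sv^2 - K*Qv) := by
          have hidd : (K*(6*K*(2*K+1)^3))*((1+B/2)*(Sv+Λ)^2 - (K+1)*(Qv+Λ^2))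
              = (6*K*(2*K+1)^3)*((K+1)*((1+B/2)*Sv^2 - K*Qv))
                + (6*K*(2*K+1)^3)*((1+B/2)*(2*K*Sv*Λ - Sv^2) + K*(B/2-K)*Λ^2) := by
            ring
          linarith [hst]
        have step2 : (K*(6*K*(2*K+1)^3))*((1+B/2)*(Sv+Λ)^2 - (K+1)*(Qv+Λ^2))
            ≤ (K*(6*K*(2*K+1)^3))*((B/2)*((K+1)^(B+2))*(υ 1)^2) := by
          calc (K*(6*K*(2*K+1)^3))*((1+B/2)*(Sv+Λ)^2 - (K+1)*(Qv+Λ^2))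
              ≤ ((K+1)^2*(6*(2*K+1)^3 + 12*B*(2*K+1)^2 + 12*B^2*(2*K+1) + 8*B^3))*((1+B/2)*Sv^2 - K*Qv) := step1
            _ ≤ ((K+1)^2*(6*(2*K+1)^3 + 12*B*(2*K+1)^2 + 12*B^2*(2*K+1) + 8*B^3))*((B/2)*((K:ℝ)^(B+2))*(υ 1)^2) := mul_le_mul_of_nonneg_left ih hrhoD0
            _ = (((K+1)^2*(6*(2*K+1)^3 + 12*B*(2*K+1)^2 + 12*B^2*(2*K+1) + 8*B^3))*K^(B+2))*((B/2)*(υ 1)^2) := by ring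
            _ ≤ ((K*(6*K*(2*K+1)^3))*(K+1)^(B+2))*((B/2)*(υ 1)^2) := by
                apply mul_le_mul_of_nonneg_right hcor
                positivity
            _ = (K*(6*K*(2*K+1)^3))*((B/2)*((K+1)^(B+2))*(υ 1)^2) := by ring
        have := le_of_mul_le_mul_left step2 hKD
        linarith [this]
  -- conclusion
  intro k hk
  have hK1 : (1:ℝ) ≤ (k:ℝ) := by exact_mod_cast hk
  have hq := hquad k hk
  have hinv := inv k hk
  set K := (k:ℝ) with hKdef
  set Λ := υ (k+1) with hΛdef
  set Sv := ∑ i ∈ Icc 1 k, υ i with hSdef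
  set Qv := ∑ i ∈ Icc 1 k, (υ i)^2 with hQdef
  have hK0 : (0:ℝ) < K := by linarith
  have h6 : (B/2)*(K^2*Λ^2) ≤ (1+B)^2*((1+B/2)*Sv^2 - K*Qv) := by
    nlinarith [mul_le_mul_of_nonneg_left hq (le_of_lt hB1),
      mul_nonneg (by linarith : (0:ℝ) ≤ 1+B/2) (sq_nonneg (K*Λ - (1+B)*Sv))]
  have hKB : K^(B+2) = K^B * K^2 := by
    rw [show B+2 = B + ((2:ℕ):ℝ) by norm_num, Real.rpow_add hK0, Real.rpow_natCast]
  have hKBnn : (0:ℝ) ≤ K^B := Real.rpow_nonneg hK0.le B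
  have h8 : (B/2)*(K^2*Λ^2) ≤ ((B/2)*K^2)*((1+B)^2*K^B*(υ 1)^2) := by
    calc (B/2)*(K^2*Λ^2) ≤ (1+B)^2*((1+B/2)*Sv^2 - K*Qv) := h6
      _ ≤ (1+B)^2*((B/2)*(K^(B+2))*(υ 1)^2) := by
          apply mul_le_mul_of_nonneg_left hinv
          positivity
      _ = ((B/2)*K^2)*((1+B)^2*K^B*(υ 1)^2) := by rw [hKB]; ring
  have hdiv : (0:ℝ) < (B/2)*K^2 := by positivity
  have h7 : Λ^2 ≤ (1+B)^2*K^B*(υ 1)^2 := by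
    have h9 : ((B/2)*K^2)*(Λ^2) ≤ ((B/2)*K^2)*((1+B)^2*K^B*(υ 1)^2) := by
      linarith [h8]
    exact le_of_mul_le_mul_left h9 hdiv
  have hrp : (0:ℝ) < K^(B/2) := Real.rpow_pos_of_pos hK0 _
  have hsq : (K^(B/2))^2 = K^B := by
    rw [← Real.rpow_natCast (K^(B/2)) 2, ← Real.rpow_mul hK0.le]
    norm_num
  have hvpos : 0 < Λ := hpos (k+1) (by omega)
  by_contra hcon
  push_neg at hcon
  have hR : (0:ℝ) < (1+B)*K^(B/2)*υ 1 := by positivity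
  have h7' : Λ^2 ≤ (1+B)^2*(K^(B/2))^2*(υ 1)^2 := by rw [hsq]; exact h7
  linarith [h7', mul_self_lt_mul_self hR.le hcon]
end

section
/- For every positive integer k, the quantity D_k := ( (B/(2k)) ∑_{i=1}^k υ_i )² − ((1 + B)/k) ∑_{j=1}^k ( υ_j − (1/k) ∑_{i=1}^k υ_i )² is nonnegative. -/
open Finset

/-- In the Cheng–Yang setting, the quantity
`D_k = ((B/(2k)) ∑ υ_i)² − ((1+B)/k) ∑ (υ_j − (1/k) ∑ υ_i)²` is nonnegative. -/
theorem stmt_5 (n : ℕ) (hn : 0 < n) (ε δ : ℝ) (hε : 0 < ε) (hεδ : ε ≤ δ)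
    (B : ℝ) (hB : B = 4 * δ / (n * ε))
    (υ : ℕ → ℝ)
    (hpos : ∀ i, 1 ≤ i → 0 < υ i)
    (hmono : ∀ i j, 1 ≤ i → i ≤ j → υ i ≤ υ j)
    (hyang : ∀ k, 1 ≤ k →
      ∑ i ∈ Icc 1 k, (υ (k + 1) - υ i) ^ 2 ≤
        B * ∑ i ∈ Icc 1 k, (υ (k + 1) - υ i) * υ i) :
    ∀ k, 1 ≤ k →
      0 ≤ (B / (2 * k) * ∑ i ∈ Icc 1 k, υ i) ^ 2 -
        ((1 + B) / k) * ∑ j ∈ Icc 1 k, (υ j - (1 / k) * ∑ i ∈ Icc 1 k, υ i) ^ 2 := by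
  intro k hk
  have hk0 : (0:ℝ) < (k:ℝ) := by exact_mod_cast hk
  set Λ : ℝ := υ (k + 1) with hΛ
  set S1 : ℝ := ∑ i ∈ Icc 1 k, υ i with hS1
  set S2 : ℝ := ∑ i ∈ Icc 1 k, (υ i) ^ 2 with hS2
  have hcard : (Icc 1 k).card = k := by simp [Nat.card_Icc]
  have e1 : ∑ i ∈ Icc 1 k, (Λ - υ i) ^ 2 = (k:ℝ) * Λ ^ 2 - 2 * Λ * S1 + S2 := by
    have h : ∀ i ∈ Icc 1 k, (Λ - υ i) ^ 2 = Λ ^ 2 - (2 * Λ) * υ i + (υ i) ^ 2 :=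
      fun i _ => by ring
    rw [Finset.sum_congr rfl h, Finset.sum_add_distrib, Finset.sum_sub_distrib,
      Finset.sum_const, hcard, ← Finset.mul_sum, nsmul_eq_mul, ← hS1, ← hS2]
  have e2 : ∑ i ∈ Icc 1 k, (Λ - υ i) * υ i = Λ * S1 - S2 := by
    have h : ∀ i ∈ Icc 1 k, (Λ - υ i) * υ i = Λ * υ i - (υ i) ^ 2 :=
      fun i _ => by ring
    rw [Finset.sum_congr rfl h, Finset.sum_sub_distrib, ← Finset.mul_sum, ← hS1, ← hS2]
  have hq : (k:ℝ) * Λ ^ 2 - (2 + B) * Λ * S1 + (1 + B) * S2 ≤ 0 := by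
    have h := hyang k hk
    rw [e1, e2] at h
    nlinarith [h]
  have hd : 4 * (k:ℝ) * (1 + B) * S2 ≤ (2 + B) ^ 2 * S1 ^ 2 := by
    have h4 : (0:ℝ) ≤ 4 * (k:ℝ) := by positivity
    nlinarith [mul_le_mul_of_nonneg_left hq h4, sq_nonneg (2 * (k:ℝ) * Λ - (2 + B) * S1)]
  have eQ : ∑ j ∈ Icc 1 k, (υ j - (1 / (k:ℝ)) * S1) ^ 2
      = S2 - 2 * ((1 / (k:ℝ)) * S1) * S1 + (k:ℝ) * ((1 / (k:ℝ)) * S1) ^ 2 := by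
    have h : ∀ j ∈ Icc 1 k, (υ j - (1 / (k:ℝ)) * S1) ^ 2
        = (υ j) ^ 2 - (2 * ((1 / (k:ℝ)) * S1)) * υ j + ((1 / (k:ℝ)) * S1) ^ 2 :=
      fun j _ => by ring
    rw [Finset.sum_congr rfl h, Finset.sum_add_distrib, Finset.sum_sub_distrib,
      Finset.sum_const, hcard, ← Finset.mul_sum, nsmul_eq_mul, ← hS1, ← hS2]
  rw [eQ]
  have key : (B / (2 * (k:ℝ)) * S1) ^ 2 -
      ((1 + B) / (k:ℝ)) * (S2 - 2 * ((1 / (k:ℝ)) * S1) * S1 + (k:ℝ) * ((1 / (k:ℝ)) * S1) ^ 2)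
      = (B ^ 2 * S1 ^ 2 - 4 * (k:ℝ) * (1 + B) * S2 + 4 * (1 + B) * S1 ^ 2) / (4 * (k:ℝ) ^ 2) := by
    field_simp
    ring
  rw [key]
  apply div_nonneg _ (by positivity)
  have hid : B ^ 2 * S1 ^ 2 + 4 * (1 + B) * S1 ^ 2 = (2 + B) ^ 2 * S1 ^ 2 := by ring
  linarith [hd]
end

section
/- For every positive integer k, υ_{k+1} ≤ (1/k)(1 + B) ∑_{i=1}^k υ_i + √D_k, where D_k = ( (B/(2k)) ∑_{i=1}^k υ_i )² − ((1 + B)/k) ∑_{j=1}^k ( υ_j − (1/k) ∑_{i=1}^k υ_i )². -/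
open Finset

/-- first inequality of Corollary 1.4. -/
theorem stmt_6 (n : ℕ) (hn : 0 < n) (ε δ : ℝ) (hε : 0 < ε) (hεδ : ε ≤ δ)
    (B : ℝ) (hB : B = 4 * δ / (n * ε))
    (υ : ℕ → ℝ)
    (hpos : ∀ i, 1 ≤ i → 0 < υ i)
    (hmono : ∀ i j, 1 ≤ i → i ≤ j → υ i ≤ υ j)
    (hyang : ∀ k, 1 ≤ k →
      ∑ i ∈ Icc 1 k, (υ (k + 1) - υ i) ^ 2 ≤
        B * ∑ i ∈ Icc 1 k, (υ (k + 1) - υ i) * υ i) :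
    ∀ k, 1 ≤ k →
      υ (k + 1) ≤ (1 / k) * (1 + B) * ∑ i ∈ Icc 1 k, υ i +
        Real.sqrt ((B / (2 * k) * ∑ i ∈ Icc 1 k, υ i) ^ 2 -
          ((1 + B) / k) * ∑ j ∈ Icc 1 k, (υ j - (1 / k) * ∑ i ∈ Icc 1 k, υ i) ^ 2) := by
  intro k hk
  have hk0 : (0 : ℝ) < k := by exact_mod_cast hk
  have hkne : (k : ℝ) ≠ 0 := ne_of_gt hk0
  set x := υ (k + 1) with hx
  set S := ∑ i ∈ Icc 1 k, υ i with hSdef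
  set Q := ∑ i ∈ Icc 1 k, υ i ^ 2 with hQdef
  have hcard : (Icc 1 k).card = k := by simp
  have hSpos : 0 < S := Finset.sum_pos
    (fun i hi => hpos i (Finset.mem_Icc.mp hi).1) ⟨1, by simp [hk]⟩
  have hδ : 0 < δ := lt_of_lt_of_le hε hεδ
  have hB0 : 0 < B := by
    rw [hB]
    have : (0 : ℝ) < n := by exact_mod_cast hn
    positivity
  have h1 : ∑ i ∈ Icc 1 k, (x - υ i) ^ 2 = k * x ^ 2 - 2 * x * S + Q := by
    have h : ∀ i ∈ Icc 1 k, (x - υ i) ^ 2 = x ^ 2 - 2 * x * υ i + υ i ^ 2 :=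
      fun i _ => by ring
    rw [Finset.sum_congr rfl h, Finset.sum_add_distrib, Finset.sum_sub_distrib,
      Finset.sum_const, hcard, nsmul_eq_mul, ← Finset.mul_sum]
  have h2 : ∑ i ∈ Icc 1 k, (x - υ i) * υ i = x * S - Q := by
    have h : ∀ i ∈ Icc 1 k, (x - υ i) * υ i = x * υ i - υ i ^ 2 :=
      fun i _ => by ring
    rw [Finset.sum_congr rfl h, Finset.sum_sub_distrib, ← Finset.mul_sum]
  have hy := hyang k hk
  rw [h1, h2] at hy
  have key : (k : ℝ) * x ^ 2 - (2 + B) * S * x + (1 + B) * Q ≤ 0 := by nlinarith [hy]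
  have h3 : ∑ j ∈ Icc 1 k, (υ j - (1 / k) * S) ^ 2 = Q - S ^ 2 / k := by
    have h : ∀ j ∈ Icc 1 k, (υ j - (1 / k) * S) ^ 2
        = υ j ^ 2 - (2 / k * S) * υ j + (1 / k * S) ^ 2 := fun j _ => by ring
    rw [Finset.sum_congr rfl h, Finset.sum_add_distrib, Finset.sum_sub_distrib,
      Finset.sum_const, hcard, nsmul_eq_mul, ← Finset.mul_sum]
    field_simp
    ring
  have harg : (B / (2 * k) * S) ^ 2 - ((1 + B) / k) * ∑ j ∈ Icc 1 k, (υ j - (1 / k) * S) ^ 2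
      = ((2 + B) * S / (2 * k)) ^ 2 - (1 + B) * Q / k := by
    rw [h3]; field_simp; ring
  have hsq : (x - (2 + B) * S / (2 * k)) ^ 2 ≤ ((2 + B) * S / (2 * k)) ^ 2 - (1 + B) * Q / k := by
    have h4 : (k : ℝ) * ((x - (2 + B) * S / (2 * k)) ^ 2
        - (((2 + B) * S / (2 * k)) ^ 2 - (1 + B) * Q / k))
        = k * x ^ 2 - (2 + B) * S * x + (1 + B) * Q := by
      field_simp; ring
    nlinarith [key, hk0]
  have h5 : x - (2 + B) * S / (2 * k)
      ≤ Real.sqrt (((2 + B) * S / (2 * k)) ^ 2 - (1 + B) * Q / k) :=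
    calc x - (2 + B) * S / (2 * k) ≤ |x - (2 + B) * S / (2 * k)| := le_abs_self _
      _ = Real.sqrt ((x - (2 + B) * S / (2 * k)) ^ 2) := (Real.sqrt_sq_eq_abs _).symm
      _ ≤ _ := Real.sqrt_le_sqrt hsq
  have h6 : (2 + B) * S / (2 * k) ≤ (1 / k) * (1 + B) * S := by
    rw [div_le_iff₀ (by positivity : (0 : ℝ) < 2 * k)]
    have : (1 / (k : ℝ)) * (1 + B) * S * (2 * k) = 2 * (1 + B) * S := by
      field_simp
    rw [this]
    nlinarith [hSpos, hB0]
  rw [harg]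
  linarith [h5, h6]
end

section
/- For every positive integer k, the gap satisfies υ_{k+1} − υ_k ≤ 2√D_k, where D_k = ( (B/(2k)) ∑_{i=1}^k υ_i )² − ((1 + B)/k) ∑_{j=1}^k ( υ_j − (1/k) ∑_{i=1}^k υ_i )². -/
open Finset

/-- second inequality of Corollary 1.4, gap estimate. -/
theorem stmt_7 (n : ℕ) (hn : 0 < n) (ε δ : ℝ) (hε : 0 < ε) (hεδ : ε ≤ δ)
    (B : ℝ) (hB : B = 4 * δ / (n * ε))
    (υ : ℕ → ℝ)
    (hpos : ∀ i, 1 ≤ i → 0 < υ i)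
    (hmono : ∀ i j, 1 ≤ i → i ≤ j → υ i ≤ υ j)
    (hyang : ∀ k, 1 ≤ k →
      ∑ i ∈ Icc 1 k, (υ (k + 1) - υ i) ^ 2 ≤
        B * ∑ i ∈ Icc 1 k, (υ (k + 1) - υ i) * υ i) :
    ∀ k, 1 ≤ k →
      υ (k + 1) - υ k ≤ 2 *
        Real.sqrt ((B / (2 * k) * ∑ i ∈ Icc 1 k, υ i) ^ 2 -
          ((1 + B) / k) * ∑ j ∈ Icc 1 k, (υ j - (1 / k) * ∑ i ∈ Icc 1 k, υ i) ^ 2) := by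
  intro k hk
  have hkN : 0 < k := hk
  have hKpos : (0:ℝ) < (k:ℝ) := by exact_mod_cast hkN
  have hK0 : (k:ℝ) ≠ 0 := ne_of_gt hKpos
  set S : ℝ := ∑ i ∈ Icc 1 k, υ i with hS
  set Q : ℝ := ∑ i ∈ Icc 1 k, (υ i)^2 with hQ
  have hcard : ((Icc 1 k).card : ℝ) = (k : ℝ) := by
    rw [Nat.card_Icc]; push_cast [Nat.add_sub_cancel]; ring
  -- expansion lemma
  have expand1 : ∀ x : ℝ, ∑ i ∈ Icc 1 k, (x - υ i)^2
      = (k:ℝ)*x^2 - 2*x*S + Q := by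
    intro x
    have : ∀ i ∈ Icc 1 k, (x - υ i)^2 = x^2 - 2*x*υ i + (υ i)^2 := by
      intro i _; ring
    rw [Finset.sum_congr rfl this, Finset.sum_add_distrib, Finset.sum_sub_distrib,
      Finset.sum_const, ← Finset.mul_sum, nsmul_eq_mul, hcard]
    try ring
  have expand2 : ∀ x : ℝ, ∑ i ∈ Icc 1 k, (x - υ i) * υ i = x*S - Q := by
    intro x
    have : ∀ i ∈ Icc 1 k, (x - υ i) * υ i = x*υ i - (υ i)^2 := by
      intro i _; ring
    rw [Finset.sum_congr rfl this, Finset.sum_sub_distrib, ← Finset.mul_sum]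
  set a : ℝ := υ (k+1) with ha
  set b : ℝ := υ k with hb
  -- p(a) ≤ 0
  have hpa : (k:ℝ)*a^2 - (2+B)*S*a + (1+B)*Q ≤ 0 := by
    have h := hyang k hk
    rw [expand1, expand2] at h
    nlinarith [h]
  -- p(b) ≤ 0
  have hpb : (k:ℝ)*b^2 - (2+B)*S*b + (1+B)*Q ≤ 0 := by
    rcases Nat.exists_eq_add_of_le hk with ⟨m, rfl⟩
    rcases Nat.eq_zero_or_pos m with hm | hm
    · subst hm
      simp only [hS, hQ] at *
      norm_num [Finset.Icc_self] at *
      nlinarith [sq_nonneg (υ 1)]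
    · have hm1 : 1 ≤ m := hm
      have h := hyang m hm1
      have hsum1 : ∑ i ∈ Icc 1 (1+m), (υ (m+1) - υ i)^2
          = ∑ i ∈ Icc 1 m, (υ (m+1) - υ i)^2 := by
        rw [show 1 + m = m + 1 by ring, Finset.sum_Icc_succ_top (by omega)]
        simp
      have hsum2 : ∑ i ∈ Icc 1 (1+m), (υ (m+1) - υ i) * υ i
          = ∑ i ∈ Icc 1 m, (υ (m+1) - υ i) * υ i := by
        rw [show 1 + m = m + 1 by ring, Finset.sum_Icc_succ_top (by omega)]
        simp
      have hb' : b = υ (m+1) := by rw [hb]; congr 1; omega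
      have h' : ∑ i ∈ Icc 1 (1+m), (b - υ i)^2
          ≤ B * ∑ i ∈ Icc 1 (1+m), (b - υ i) * υ i := by
        rw [hb', hsum1, hsum2]; exact h
      rw [expand1, expand2] at h'
      nlinarith [h']
  -- discriminant
  set d : ℝ := (2+B)^2*S^2 - 4*(k:ℝ)*(1+B)*Q with hd
  have hu : (2*(k:ℝ)*a - (2+B)*S)^2 ≤ d := by nlinarith [mul_nonneg hKpos.le (neg_nonneg.mpr hpa)]
  have hv : (2*(k:ℝ)*b - (2+B)*S)^2 ≤ d := by nlinarith [mul_nonneg hKpos.le (neg_nonneg.mpr hpb)]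
  have hkey : (a - b)^2 ≤ d / (k:ℝ)^2 := by
    rw [le_div_iff₀ (by positivity)]
    nlinarith [sq_nonneg ((2*(k:ℝ)*a - (2+B)*S) + (2*(k:ℝ)*b - (2+B)*S))]
  -- identify D
  set D : ℝ := (B / (2 * (k:ℝ)) * S) ^ 2 -
      ((1 + B) / (k:ℝ)) * ∑ j ∈ Icc 1 k, (υ j - (1 / (k:ℝ)) * S) ^ 2 with hD
  have hsumsq : ∑ j ∈ Icc 1 k, (υ j - (1 / (k:ℝ)) * S) ^ 2 = Q - S^2/(k:ℝ) := by
    have : ∀ j ∈ Icc 1 k, (υ j - (1 / (k:ℝ)) * S) ^ 2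
        = ((1 / (k:ℝ)) * S - υ j)^2 := by intro j _; ring
    rw [Finset.sum_congr rfl this, expand1]
    field_simp
    try ring
  have hDd : D = d / (4*(k:ℝ)^2) := by
    rw [hD, hsumsq, hd]
    field_simp
    try ring
  have hDd' : 4 * D = d / (k:ℝ)^2 := by rw [hDd]; field_simp
  have hfinal : (a - b)^2 ≤ 4 * D := by rw [hDd']; exact hkey
  have hDnn : 0 ≤ D := by linarith [sq_nonneg (a - b), hfinal]
  calc a - b ≤ |a - b| := le_abs_self _
    _ = Real.sqrt ((a-b)^2) := (Real.sqrt_sq_eq_abs _).symm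
    _ ≤ Real.sqrt (4 * D) := Real.sqrt_le_sqrt hfinal
    _ = 2 * Real.sqrt D := by
        rw [show (4:ℝ) * D = (2:ℝ)^2 * D by ring, Real.sqrt_mul (by positivity),
          Real.sqrt_sq (by norm_num)]
end

section
/- For every positive integer k, υ_{k+1} ≤ (1/k)(1 + B) ∑_{i=1}^k υ_i (a Yang-type second inequality). -/
open Finset

/-- Yang-type second inequality. -/
theorem stmt_8 (n : ℕ) (hn : 0 < n) (ε δ : ℝ) (hε : 0 < ε) (hεδ : ε ≤ δ)
    (B : ℝ) (hB : B = 4 * δ / (n * ε))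
    (υ : ℕ → ℝ)
    (hpos : ∀ i, 1 ≤ i → 0 < υ i)
    (hmono : ∀ i j, 1 ≤ i → i ≤ j → υ i ≤ υ j)
    (hyang : ∀ k, 1 ≤ k →
      ∑ i ∈ Icc 1 k, (υ (k + 1) - υ i) ^ 2 ≤
        B * ∑ i ∈ Icc 1 k, (υ (k + 1) - υ i) * υ i) :
    ∀ k, 1 ≤ k → υ (k + 1) ≤ (1 / k) * (1 + B) * ∑ i ∈ Icc 1 k, υ i := by
  intro k hk
  have hB0 : 0 ≤ B := by
    have hδ : 0 < δ := lt_of_lt_of_le hε hεδ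
    have hn' : (0:ℝ) < n := by exact_mod_cast hn
    rw [hB]
    positivity
  set u := υ (k + 1) with hu
  set S := ∑ i ∈ Icc 1 k, υ i with hS
  set Q := ∑ i ∈ Icc 1 k, (υ i) ^ 2 with hQ
  have hcard : (Icc 1 k).card = k := by
    rw [Nat.card_Icc]; omega
  have e1 : ∑ i ∈ Icc 1 k, (u - υ i) ^ 2 = (k : ℝ) * u ^ 2 - 2 * u * S + Q := by
    have h : ∀ i ∈ Icc 1 k, (u - υ i) ^ 2 = u ^ 2 - 2 * u * υ i + υ i ^ 2 :=
      fun i _ => by ring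
    rw [Finset.sum_congr rfl h, Finset.sum_add_distrib, Finset.sum_sub_distrib,
      Finset.sum_const, hcard, ← Finset.mul_sum]
    push_cast; ring
  have e2 : ∑ i ∈ Icc 1 k, (u - υ i) * υ i = u * S - Q := by
    have h : ∀ i ∈ Icc 1 k, (u - υ i) * υ i = u * υ i - υ i ^ 2 :=
      fun i _ => by ring
    rw [Finset.sum_congr rfl h, Finset.sum_sub_distrib, ← Finset.mul_sum]
  have hy := hyang k hk
  rw [e1, e2] at hy
  -- Cauchy-Schwarz: S^2 ≤ k * Q
  have hCS : S ^ 2 ≤ (k : ℝ) * Q := by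
    have := Finset.sum_mul_sq_le_sq_mul_sq (Icc 1 k) (fun _ => (1 : ℝ)) υ
    simpa [hcard, hS, hQ] using this
  -- S ≤ k * u
  have hle : S ≤ (k : ℝ) * u := by
    rw [hS]
    calc ∑ i ∈ Icc 1 k, υ i ≤ ∑ i ∈ Icc 1 k, u := by
          apply Finset.sum_le_sum
          intro i hi
          obtain ⟨h1, h2⟩ := mem_Icc.mp hi
          exact hmono i (k + 1) h1 (by omega)
      _ = (k : ℝ) * u := by rw [Finset.sum_const, hcard]; push_cast; ring
  have hSpos : 0 < S := by
    rw [hS]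
    apply Finset.sum_pos (fun i hi => hpos i (mem_Icc.mp hi).1)
    exact ⟨1, mem_Icc.mpr ⟨le_refl 1, hk⟩⟩
  have hk0 : (0 : ℝ) < k := by exact_mod_cast hk
  -- quadratic: (k*u - S)*(k*u - (1+B)*S) ≤ 0
  have hquad : ((k : ℝ) * u - S) * ((k : ℝ) * u - (1 + B) * S) ≤ 0 := by
    nlinarith [mul_le_mul_of_nonneg_left hy hk0.le,
      mul_le_mul_of_nonneg_left hCS (by linarith : (0:ℝ) ≤ 1 + B)]
  have hmain : (k : ℝ) * u ≤ (1 + B) * S := by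
    nlinarith [mul_nonneg hB0 hSpos.le]
  rw [div_mul_eq_mul_div, div_mul_eq_mul_div, le_div_iff₀ hk0]
  linarith
end

section
/- Let A > 0 and c be real numbers, and let (λ_i)_{i≥1} be a nondecreasing sequence of real numbers tending to +∞ such that for every positive integer k one has ∑_{i=1}^k (λ_{k+1} − λ_i)² ≤ A · ∑_{i=1}^k (λ_{k+1} − λ_i)(λ_i − c). Then λ_1 ≥ c. -/
open Finset

/-- If a nondecreasing sequence `λ_i → +∞` satisfies
`∑_{i=1}^k (λ_{k+1} − λ_i)² ≤ A ∑_{i=1}^k (λ_{k+1} − λ_i)(λ_i − c)` for all `k ≥ 1`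
with `A > 0`, then `λ₁ ≥ c`. -/
theorem stmt_9 (A c : ℝ) (hA : 0 < A) (lam : ℕ → ℝ)
    (hmono : ∀ i j, 1 ≤ i → i ≤ j → lam i ≤ lam j)
    (htend : Filter.Tendsto lam Filter.atTop Filter.atTop)
    (hineq : ∀ k, 1 ≤ k →
      ∑ i ∈ Icc 1 k, (lam (k + 1) - lam i) ^ 2 ≤
        A * ∑ i ∈ Icc 1 k, (lam (k + 1) - lam i) * (lam i - c)) :
    c ≤ lam 1 := by
  by_contra hlt
  push_neg at hlt
  -- claim: lam k = lam 1 for all k ≥ 1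
  have hconst : ∀ k, 1 ≤ k → lam k = lam 1 := by
    intro k hk
    induction k, hk using Nat.le_induction with
    | base => rfl
    | succ k hk ih =>
      have ihall : ∀ i, 1 ≤ i → i ≤ k → lam i = lam 1 := by
        intro i hi hik
        have h1 := hmono 1 i le_rfl hi
        have h2 := hmono i k hi hik
        have := ih
        linarith
      have h := hineq k hk
      have hL : ∑ i ∈ Icc 1 k, (lam (k + 1) - lam i) ^ 2
          = (k : ℝ) * (lam (k + 1) - lam 1) ^ 2 := by
        rw [Finset.sum_congr rfl (fun i hi => by
          rw [ihall i (mem_Icc.mp hi).1 (mem_Icc.mp hi).2]),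
          Finset.sum_const, Nat.card_Icc]
        simp [nsmul_eq_mul]
      have hR : ∑ i ∈ Icc 1 k, (lam (k + 1) - lam i) * (lam i - c)
          = (k : ℝ) * ((lam (k + 1) - lam 1) * (lam 1 - c)) := by
        rw [Finset.sum_congr rfl (fun i hi => by
          rw [ihall i (mem_Icc.mp hi).1 (mem_Icc.mp hi).2]),
          Finset.sum_const, Nat.card_Icc]
        simp [nsmul_eq_mul]
      rw [hL, hR] at h
      have ht : 0 ≤ lam (k + 1) - lam 1 :=
        sub_nonneg.mpr (hmono 1 (k + 1) le_rfl (by omega))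
      have hk' : (1 : ℝ) ≤ (k : ℝ) := by exact_mod_cast hk
      have hRneg : (lam (k + 1) - lam 1) * (lam 1 - c) ≤ 0 :=
        mul_nonpos_of_nonneg_of_nonpos ht (by linarith)
      have hR0 : A * ((k : ℝ) * ((lam (k + 1) - lam 1) * (lam 1 - c))) ≤ 0 :=
        mul_nonpos_of_nonneg_of_nonpos hA.le
          (mul_nonpos_of_nonneg_of_nonpos (by positivity) hRneg)
      have : (k : ℝ) * (lam (k + 1) - lam 1) ^ 2 ≤ 0 := le_trans h hR0
      have hsq : (lam (k + 1) - lam 1) ^ 2 ≤ 0 := by nlinarith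
      have : lam (k + 1) - lam 1 = 0 := by nlinarith [sq_nonneg (lam (k + 1) - lam 1)]
      linarith
  obtain ⟨N, hN⟩ := (htend.eventually_ge_atTop (c + 1)).exists_forall_of_atTop
  have h1 := hN (max N 1) (le_max_left _ _)
  have h2 := hconst (max N 1) (le_max_right _ _)
  linarith
end
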